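/- arXiv:2303.10260 — 2 statements merged into one kernel-verified Lean document; each statement's English description precedes it below -/
import Mathlib

section
/- Let A ∈ ℝ^{n×n}, B ∈ ℝ^{n×m}, K ∈ ℝ^{m×n} with ρ(A−BK) < 1, and let Q ⪰ 0 satisfy: the pair (Q^{1/2}, A) is detectable, and R ≻ 0. Define S = (I − A + BK)^{-1} B. Then the matrix S^⊤ Q S + (I − KS)^⊤ R (I − KS) is positive definite; equivalently, the function v ↦ ‖Sv − r̄ + SK r̄‖_Q² + ‖(I−KS)(v + K r̄)‖_R² is strictly convex in v. -/
/-!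
Both summands are positive semidefinite, so only a nonzero `x` with `(1 - K S) x = 0` could make
the form vanish. Then `y := S x` is nonzero (as `x = K y`) and `(1 - A + B K) y = B x = B K y`,
i.e. `A y = y`. An eigenvector of `A` for the eigenvalue `1` is not in the kernel of `Q` by
detectability, so `yᵀ Q y > 0`.
-/

open scoped Matrix

namespace Matrix

variable {ι κ ν : Type*} [Fintype ι] [Fintype κ] [Fintype ν]

/-- Detectability of `(Q^{1/2}, A)` by the PBH test; `Q` and `Q^{1/2}` have the same kernel. -/
def IsDetectable (A Q : Matrix ι ι ℝ) : Prop :=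
  ∀ (μ : ℂ) (v : ι → ℂ), v ≠ 0 → (A.map (algebraMap ℝ ℂ)).mulVec v = μ • v → 1 ≤ ‖μ‖ →
    (Q.map (algebraMap ℝ ℂ)).mulVec v ≠ 0

theorem IsDetectable.eq_zero_of_mulVec_eq_self {A Q : Matrix ι ι ℝ} (hdet : IsDetectable A Q)
    {y : ι → ℝ} (hA : A *ᵥ y = y) (hQ : Q *ᵥ y = 0) : y = 0 := by
  have hmap (M : Matrix ι ι ℝ) : M.map (algebraMap ℝ ℂ) *ᵥ (algebraMap ℝ ℂ ∘ y) =
      algebraMap ℝ ℂ ∘ (M *ᵥ y) := funext fun i => (RingHom.map_mulVec _ M y i).symm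
  by_contra hy
  refine hdet 1 (algebraMap ℝ ℂ ∘ y) ?_ ?_ (by simp) ?_
  · exact fun h => hy (funext fun i => by simpa using congrFun h i)
  · rw [hmap, hA, one_smul]
  · rw [hmap, hQ]
    exact funext fun i => by simp

theorem posDef_transpose_mul_mul_add_transpose_mul_mul {Q : Matrix κ κ ℝ} {R : Matrix ν ν ℝ}
    {S : Matrix κ ι ℝ} {T : Matrix ν ι ℝ} (hQ : Q.PosSemidef) (hR : R.PosDef)
    (hker : ∀ x, x ≠ 0 → T *ᵥ x = 0 → Q *ᵥ (S *ᵥ x) ≠ 0) :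
    (Sᵀ * Q * S + Tᵀ * R * T).PosDef := by
  have hQS := hQ.conjTranspose_mul_mul_same S
  have hRT := hR.posSemidef.conjTranspose_mul_mul_same T
  simp only [conjTranspose_eq_transpose_of_trivial] at hQS hRT
  refine .of_dotProduct_mulVec_pos (hQS.isHermitian.add hRT.isHermitian) fun x hx => ?_
  have hform : star x ⬝ᵥ (Sᵀ * Q * S + Tᵀ * R * T) *ᵥ x =
      S *ᵥ x ⬝ᵥ Q *ᵥ (S *ᵥ x) + T *ᵥ x ⬝ᵥ R *ᵥ (T *ᵥ x) := by
    simp only [star_trivial, add_mulVec, dotProduct_add, ← mulVec_mulVec, dotProduct_mulVec,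
      vecMul_transpose]
  have hq := hQ.dotProduct_mulVec_nonneg (S *ᵥ x)
  have hr := hR.posSemidef.dotProduct_mulVec_nonneg (T *ᵥ x)
  simp only [star_trivial] at hq hr
  rw [hform]
  by_cases hTx : T *ᵥ x = 0
  · have hq' : 0 < S *ᵥ x ⬝ᵥ Q *ᵥ (S *ᵥ x) := hq.lt_of_ne fun h => hker x hx hTx <|
      (hQ.dotProduct_mulVec_zero_iff _).mp (by simpa using h.symm)
    linarith
  · have hr' := hR.dotProduct_mulVec_pos hTx
    simp only [star_trivial] at hr'
    linarith

theorem mulVec_eq_self_of_one_sub_add_mul_mulVec_eq [DecidableEq ι] {A : Matrix ι ι ℝ}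
    {B : Matrix ι κ ℝ} {K : Matrix κ ι ℝ} {y : ι → ℝ}
    (h : (1 - A + B * K) *ᵥ y = B *ᵥ (K *ᵥ y)) : A *ᵥ y = y := by
  rw [add_mulVec, sub_mulVec, one_mulVec, ← mulVec_mulVec, add_eq_right, sub_eq_zero] at h
  exact h.symm

end Matrix

open Matrix in
theorem stmt2_general {n m : ℕ} (A : Matrix (Fin n) (Fin n) ℝ) (B : Matrix (Fin n) (Fin m) ℝ)
    (K : Matrix (Fin m) (Fin n) ℝ) (Q : Matrix (Fin n) (Fin n) ℝ) (R : Matrix (Fin m) (Fin m) ℝ)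
    (hQ : Q.PosSemidef) (hR : R.PosDef)
    (hdet : ∀ (μ : ℂ) (v : Fin n → ℂ), v ≠ 0 →
      (A.map (algebraMap ℝ ℂ)).mulVec v = μ • v → 1 ≤ ‖μ‖ →
      (Q.map (algebraMap ℝ ℂ)).mulVec v ≠ 0) :
    (((1 - A + B * K)⁻¹ * B)ᵀ * Q * ((1 - A + B * K)⁻¹ * B) +
      (1 - K * ((1 - A + B * K)⁻¹ * B))ᵀ * R *
        (1 - K * ((1 - A + B * K)⁻¹ * B))).PosDef := by
  set M := 1 - A + B * K
  refine posDef_transpose_mul_mul_add_transpose_mul_mul hQ hR fun x hx hTx => ?_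
  set y := (M⁻¹ * B) *ᵥ x
  have hxy : x = K *ᵥ y := by
    rwa [sub_mulVec, one_mulVec, sub_eq_zero, ← mulVec_mulVec] at hTx
  have hy : y ≠ 0 := fun h => hx (by rw [hxy, h, mulVec_zero])
  -- `M⁻¹ = 0` for singular `M`, which would force `y = 0`.
  have hM : IsUnit M.det := by
    by_contra hM
    simp [y, nonsing_inv_apply_not_isUnit _ hM] at hy
  have hAy : A *ᵥ y = y := mulVec_eq_self_of_one_sub_add_mul_mulVec_eq (B := B) (K := K) <| by
    rw [← hxy, mulVec_mulVec, ← Matrix.mul_assoc, mul_nonsing_inv _ hM, Matrix.one_mul]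
  exact fun hQy => hy (IsDetectable.eq_zero_of_mulVec_eq_self hdet hAy hQy)

/-- strict convexity / positive definiteness of the steady-state cost Hessian. -/
theorem stmt2 {n m : ℕ} (A : Matrix (Fin n) (Fin n) ℝ) (B : Matrix (Fin n) (Fin m) ℝ)
    (K : Matrix (Fin m) (Fin n) ℝ) (Q : Matrix (Fin n) (Fin n) ℝ) (R : Matrix (Fin m) (Fin m) ℝ)
    (hρ : spectralRadius ℂ ((A - B * K).map (algebraMap ℝ ℂ)) < 1)
    (hQ : Q.PosSemidef) (hR : R.PosDef)
    (hdet : ∀ (μ : ℂ) (v : Fin n → ℂ), v ≠ 0 →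
      (A.map (algebraMap ℝ ℂ)).mulVec v = μ • v → 1 ≤ ‖μ‖ →
      (Q.map (algebraMap ℝ ℂ)).mulVec v ≠ 0) :
    (((1 - A + B * K)⁻¹ * B)ᵀ * Q * ((1 - A + B * K)⁻¹ * B) +
      (1 - K * ((1 - A + B * K)⁻¹ * B))ᵀ * R *
        (1 - K * ((1 - A + B * K)⁻¹ * B))).PosDef :=
  stmt2_general A B K Q R hQ hR hdet
end

section
/- Let F ∈ ℝ^{n×n} with ρ(F) < 1, and suppose ‖F^k‖ ≤ c λ^k for all k ≥ 0 with 0 < λ < 1. Given vectors w_0,…,w_{T−1} with Δw_{i,t} = w_i − w_t, and any matrix G, the double sum satisfies Σ_{t=0}^{T−1} ‖Σ_{i=t}^{T−1} G F^{i−t} Δw_{i,t}‖ ≤ (‖G‖ c / (1−λ)²) · Σ_{j=1}^{T−1} ‖w_j − w_{j−1}‖. -/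
open scoped Matrix.Norms.L2Operator

/-- Matrix-vector product as a map of Euclidean spaces. -/
noncomputable def mulE {a b : ℕ} (A : Matrix (Fin a) (Fin b) ℝ) (x : EuclideanSpace ℝ (Fin b)) :
    EuclideanSpace ℝ (Fin a) :=
  (WithLp.equiv 2 _).symm (A.mulVec ((WithLp.equiv 2 _) x))

/-!
Telescope `w i - w t` into increments `d j = ‖w (j+1) - w j‖` and bound `‖G F^k‖ ≤ ‖G‖ c λ^k`.
The left side is then at most `‖G‖ c` times the triple sum of `λ^(i-t) d j` over `t ≤ j < i < T`.
Exchanging the order of summation, the weight of `d j` is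
`∑_{t ≤ j} ∑_{j < i < T} λ^(i-t) = (∑_{t ≤ j} λ^(j-t)) (∑_{j < i < T} λ^(i-j))`,
a product of two geometric sums, hence at most `(1 - λ)⁻²`.
-/

open Finset

lemma norm_mulE_le {a b : ℕ} (A : Matrix (Fin a) (Fin b) ℝ) (x : EuclideanSpace ℝ (Fin b)) :
    ‖mulE A x‖ ≤ ‖A‖ * ‖x‖ :=
  A.l2_opNorm_mulVec x

lemma norm_sub_le_sum_Ico_norm_sub {E : Type*} [SeminormedAddCommGroup E] (w : ℕ → E)
    {t i : ℕ} (h : t ≤ i) : ‖w i - w t‖ ≤ ∑ j ∈ Ico t i, ‖w (j + 1) - w j‖ := by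
  simpa only [← dist_eq_norm, dist_comm] using dist_le_Ico_sum_dist w h

lemma sum_Ico_one_norm_sub_pred {E : Type*} [SeminormedAddCommGroup E] (w : ℕ → E) (T : ℕ) :
    ∑ j ∈ Ico 1 T, ‖w j - w (j - 1)‖ = ∑ j ∈ range (T - 1), ‖w (j + 1) - w j‖ := by
  rw [sum_Ico_eq_sum_range]
  refine sum_congr rfl fun j _ => ?_
  rw [Nat.add_sub_cancel_left, add_comm]

section GeometricWeights

variable {K : Type*} [Field K] [LinearOrder K] [IsStrictOrderedRing K] {r : K}

lemma sum_range_pow_le_inv_one_sub (hr0 : 0 ≤ r) (hr1 : r < 1) (n : ℕ) :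
    ∑ k ∈ range n, r ^ k ≤ (1 - r)⁻¹ := by
  have := geom_sum_Ico_le_of_lt_one (m := 0) (n := n) hr0 hr1
  rwa [← range_eq_Ico, pow_zero, one_div] at this

lemma sum_range_sum_Ico_pow_sub_le (hr0 : 0 ≤ r) (hr1 : r < 1) (j T : ℕ) :
    ∑ t ∈ range (j + 1), ∑ i ∈ Ico (j + 1) T, r ^ (i - t) ≤ ((1 - r) ^ 2)⁻¹ := by
  have hsplit : ∑ t ∈ range (j + 1), ∑ i ∈ Ico (j + 1) T, r ^ (i - t) =
      (∑ t ∈ range (j + 1), r ^ t) * ∑ k ∈ range (T - (j + 1)), r ^ (k + 1) := by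
    rw [← sum_range_reflect, sum_mul_sum]
    refine sum_congr rfl fun t ht => ?_
    rw [sum_Ico_eq_sum_range]
    refine sum_congr rfl fun k _ => ?_
    rw [← pow_add]
    congr 1
    have := mem_range.mp ht
    omega
  have htail : ∑ k ∈ range (T - (j + 1)), r ^ (k + 1) ≤ (1 - r)⁻¹ :=
    (sum_le_sum fun k _ => pow_le_pow_of_le_one hr0 hr1.le k.le_succ).trans
      (sum_range_pow_le_inv_one_sub hr0 hr1 _)
  rw [hsplit, ← inv_pow, sq]
  exact mul_le_mul (sum_range_pow_le_inv_one_sub hr0 hr1 _) htail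
    (sum_nonneg fun k _ => pow_nonneg hr0 _) (inv_nonneg.mpr (by linarith))

lemma sum_sum_pow_mul_sum_Ico_eq {R : Type*} [CommSemiring R] (r : R) (d : ℕ → R) (T : ℕ) :
    ∑ t ∈ range T, ∑ i ∈ Ico t T, r ^ (i - t) * ∑ j ∈ Ico t i, d j =
      ∑ j ∈ range (T - 1), (∑ t ∈ range (j + 1), ∑ i ∈ Ico (j + 1) T, r ^ (i - t)) * d j := by
  simp_rw [mul_sum, sum_mul]
  rw [sum_congr rfl fun t _ => sum_comm' (t' := Ico t (T - 1)) (s' := fun j => Ico (j + 1) T)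
    (fun i j => by simp only [mem_Ico]; omega)]
  exact sum_comm' fun t j => by simp only [mem_Ico, mem_range]; omega

lemma sum_sum_pow_mul_sum_Ico_le (hr0 : 0 ≤ r) (hr1 : r < 1) {d : ℕ → K} (hd : ∀ j, 0 ≤ d j)
    (T : ℕ) :
    ∑ t ∈ range T, ∑ i ∈ Ico t T, r ^ (i - t) * ∑ j ∈ Ico t i, d j ≤
      (∑ j ∈ range (T - 1), d j) / (1 - r) ^ 2 := by
  rw [sum_sum_pow_mul_sum_Ico_eq, div_eq_inv_mul, mul_sum]
  exact sum_le_sum fun j _ =>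
    mul_le_mul_of_nonneg_right (sum_range_sum_Ico_pow_sub_le hr0 hr1 j T) (hd j)

end GeometricWeights

lemma norm_sum_mulE_pow_le {n q : ℕ} (F : Matrix (Fin n) (Fin n) ℝ) (G : Matrix (Fin q) (Fin n) ℝ)
    {c lam : ℝ} (hF : ∀ k : ℕ, ‖F ^ k‖ ≤ c * lam ^ k) (w : ℕ → EuclideanSpace ℝ (Fin n))
    (t T : ℕ) :
    ‖∑ i ∈ Ico t T, mulE (G * F ^ (i - t)) (w i - w t)‖ ≤
      ‖G‖ * c * ∑ i ∈ Ico t T, lam ^ (i - t) * ∑ j ∈ Ico t i, ‖w (j + 1) - w j‖ := by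
  rw [mul_sum]
  refine (norm_sum_le _ _).trans (sum_le_sum fun i hi => ?_)
  have hti : t ≤ i := (mem_Ico.mp hi).1
  calc ‖mulE (G * F ^ (i - t)) (w i - w t)‖
      ≤ ‖G * F ^ (i - t)‖ * ‖w i - w t‖ := norm_mulE_le _ _
    _ ≤ ‖G‖ * ‖F ^ (i - t)‖ * ‖w i - w t‖ := by gcongr; exact Matrix.l2_opNorm_mul _ _
    _ ≤ ‖G‖ * ‖F ^ (i - t)‖ * ∑ j ∈ Ico t i, ‖w (j + 1) - w j‖ := by
        gcongr
        exact norm_sub_le_sum_Ico_norm_sub w hti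
    _ ≤ ‖G‖ * (c * lam ^ (i - t)) * ∑ j ∈ Ico t i, ‖w (j + 1) - w j‖ := by
        gcongr
        exact hF _
    _ = ‖G‖ * c * (lam ^ (i - t) * ∑ j ∈ Ico t i, ‖w (j + 1) - w j‖) := by ring

theorem stmt7_general {n q : ℕ} (F : Matrix (Fin n) (Fin n) ℝ) (G : Matrix (Fin q) (Fin n) ℝ)
    (c lam : ℝ) (hlam0 : 0 < lam) (hlam1 : lam < 1)
    (hF : ∀ k : ℕ, ‖F ^ k‖ ≤ c * lam ^ k)
    (T : ℕ) (w : ℕ → EuclideanSpace ℝ (Fin n)) :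
    ∑ t ∈ Finset.range T, ‖∑ i ∈ Finset.Ico t T, mulE (G * F ^ (i - t)) (w i - w t)‖ ≤
      ‖G‖ * c / (1 - lam) ^ 2 * ∑ j ∈ Finset.Ico 1 T, ‖w j - w (j - 1)‖ := by
  have hc : 0 ≤ c := by simpa using (norm_nonneg _).trans (hF 0)
  calc ∑ t ∈ range T, ‖∑ i ∈ Ico t T, mulE (G * F ^ (i - t)) (w i - w t)‖
      ≤ ‖G‖ * c * ∑ t ∈ range T, ∑ i ∈ Ico t T,
          lam ^ (i - t) * ∑ j ∈ Ico t i, ‖w (j + 1) - w j‖ := by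
        rw [mul_sum]
        exact sum_le_sum fun t _ => norm_sum_mulE_pow_le F G hF w t T
    _ ≤ ‖G‖ * c * ((∑ j ∈ range (T - 1), ‖w (j + 1) - w j‖) / (1 - lam) ^ 2) := by
        gcongr
        exact sum_sum_pow_mul_sum_Ico_le hlam0.le hlam1 (fun _ => norm_nonneg _) T
    _ = ‖G‖ * c / (1 - lam) ^ 2 * ∑ j ∈ Ico 1 T, ‖w j - w (j - 1)‖ := by
        rw [sum_Ico_one_norm_sub_pred]
        ring

/-- bound on the double sum of convolved disturbance increments. -/
theorem stmt7 {n q : ℕ} (F : Matrix (Fin n) (Fin n) ℝ) (G : Matrix (Fin q) (Fin n) ℝ)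
    (c lam : ℝ) (hlam0 : 0 < lam) (hlam1 : lam < 1)
    (hρ : spectralRadius ℂ (F.map (algebraMap ℝ ℂ)) < 1)
    (hF : ∀ k : ℕ, ‖F ^ k‖ ≤ c * lam ^ k)
    (T : ℕ) (w : ℕ → EuclideanSpace ℝ (Fin n)) :
    ∑ t ∈ Finset.range T, ‖∑ i ∈ Finset.Ico t T, mulE (G * F ^ (i - t)) (w i - w t)‖ ≤
      ‖G‖ * c / (1 - lam) ^ 2 * ∑ j ∈ Finset.Ico 1 T, ‖w j - w (j - 1)‖ :=
  stmt7_general F G c lam hlam0 hlam1 hF T w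
end
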